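/- Let V ∈ L¹(ℝ) satisfy ∫_ℝ |r|^{2s} |V(r)| dr < ∞ for some s ∈ (0,1]. Then for all z > 0, Q ≥ 0, and ε > 0: ∫_ℝ ∫_ℝ |V(r)| |V(r')| · |G¹_{(z+Q)/2}(ε(r − r')) − G¹_{(z+Q)/2}(0)|² dr' dr ≤ ε^{2s} · z^{s−1} · ‖V‖_{L¹} · ∫_ℝ |r|^{2s} |V(r)| dr. -/

import Mathlib

open MeasureTheory
open scoped NNReal

/-- The one-dimensional Green's function `G¹_λ(r) = exp(-√λ |r|) / (2√λ)`. -/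
noncomputable def green1 (lam : ℝ) (r : ℝ) : ℝ :=
  Real.exp (-Real.sqrt lam * |r|) / (2 * Real.sqrt lam)

lemma green1_pointwise {lam s : ℝ} (hlam : 0 < lam) (hs : s ∈ Set.Ioc (0:ℝ) 1) (x : ℝ) :
    |green1 lam x - green1 lam 0| ^ 2 ≤ lam ^ (s - 1) * |x| ^ (2 * s) / 4 := by
  obtain ⟨hs0, hs1⟩ := hs
  have hsq : 0 < Real.sqrt lam := Real.sqrt_pos.mpr hlam
  set t : ℝ := Real.sqrt lam * |x| with ht
  have ht0 : 0 ≤ t := mul_nonneg hsq.le (abs_nonneg _)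
  have hexp1 : Real.exp (-t) ≤ 1 := Real.exp_le_one_iff.mpr (by linarith)
  have key : 1 - Real.exp (-t) ≤ t ^ s := by
    rcases le_or_gt t 1 with h | h
    · rcases eq_or_lt_of_le ht0 with h0 | h0
      · simp only [← h0]
        simpa using Real.rpow_nonneg (le_refl (0:ℝ)) s
      · calc 1 - Real.exp (-t) ≤ t := by nlinarith [Real.add_one_le_exp (-t)]
          _ = t ^ (1:ℝ) := (Real.rpow_one t).symm
          _ ≤ t ^ s := Real.rpow_le_rpow_of_exponent_ge h0 h hs1
    · calc 1 - Real.exp (-t) ≤ 1 := by nlinarith [Real.exp_pos (-t)]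
        _ ≤ t ^ s := Real.one_le_rpow h.le hs0.le
  have hdiff : |green1 lam x - green1 lam 0| = (1 - Real.exp (-t)) / (2 * Real.sqrt lam) := by
    have h' : green1 lam x - green1 lam 0 = (Real.exp (-t) - 1) / (2 * Real.sqrt lam) := by
      simp [green1, ht, sub_div, neg_mul]
    rw [h', abs_div, abs_of_pos (show (0:ℝ) < 2 * Real.sqrt lam by positivity),
      abs_sub_comm, abs_of_nonneg (by linarith)]
  have h1 : |green1 lam x - green1 lam 0| ^ 2 ≤ (t ^ s) ^ 2 / (4 * lam) := by
    rw [hdiff, div_pow]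
    have hb : (2 * Real.sqrt lam) ^ 2 = 4 * lam := by
      rw [mul_pow, Real.sq_sqrt hlam.le]; norm_num
    rw [hb]
    gcongr
  refine h1.trans (le_of_eq ?_)
  have h2 : (t ^ s) ^ 2 = lam ^ s * |x| ^ (2 * s) := by
    have e1 : (t ^ s) ^ 2 = t ^ (s * 2) := by
      rw [← Real.rpow_natCast (t ^ s) 2, ← Real.rpow_mul ht0]; norm_num
    rw [e1, ht, Real.mul_rpow hsq.le (abs_nonneg x), Real.sqrt_eq_rpow,
      ← Real.rpow_mul hlam.le, show (1/2 : ℝ) * (s * 2) = s by ring,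
      show s * 2 = 2 * s by ring]
  rw [h2, Real.rpow_sub hlam, Real.rpow_one]
  ring

lemma rpow_sub_abs_le {s : ℝ} (hs : s ∈ Set.Ioc (0:ℝ) 1) (a b : ℝ) :
    |a - b| ^ (2 * s) ≤ 2 ^ s * (|a| ^ (2 * s) + |b| ^ (2 * s)) := by
  obtain ⟨hs0, hs1⟩ := hs
  have h2s : 0 < 2 * s := by linarith
  have step1 : |a - b| ^ (2 * s) ≤ (|a| + |b|) ^ (2 * s) :=
    Real.rpow_le_rpow (abs_nonneg _) (abs_sub a b) h2s.le
  have hcast : ((Real.toNNReal |a| + Real.toNNReal |b|) ^ (2*s) : ℝ≥0) =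
      Real.toNNReal ((|a| + |b|) ^ (2*s)) := by
    rw [← Real.toNNReal_add (abs_nonneg a) (abs_nonneg b),
      Real.toNNReal_rpow_of_nonneg (by positivity)]
  have habs : ((Real.toNNReal |a| ^ (2*s) + Real.toNNReal |b| ^ (2*s) : ℝ≥0) : ℝ)
      = |a| ^ (2*s) + |b| ^ (2*s) := by
    push_cast
    rw [Real.coe_toNNReal _ (abs_nonneg a), Real.coe_toNNReal _ (abs_nonneg b)]
  have ha' : (0:ℝ) ≤ |a| ^ (2*s) := Real.rpow_nonneg (abs_nonneg a) _
  have hb' : (0:ℝ) ≤ |b| ^ (2*s) := Real.rpow_nonneg (abs_nonneg b) _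
  refine step1.trans ?_
  rcases le_or_gt (2 * s) 1 with h | h
  · have hN := NNReal.rpow_add_le_add_rpow (Real.toNNReal |a|) (Real.toNNReal |b|) h2s.le h
    have h1 : (1:ℝ) ≤ 2 ^ s := Real.one_le_rpow (by norm_num) hs0.le
    calc (|a| + |b|) ^ (2*s)
        = ((Real.toNNReal ((|a| + |b|) ^ (2*s)) : ℝ≥0) : ℝ) := by
          rw [Real.coe_toNNReal _ (by positivity)]
      _ ≤ ((Real.toNNReal |a| ^ (2*s) + Real.toNNReal |b| ^ (2*s) : ℝ≥0) : ℝ) := by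
          rw [← hcast]; exact_mod_cast hN
      _ = |a| ^ (2*s) + |b| ^ (2*s) := habs
      _ ≤ 2 ^ s * (|a| ^ (2*s) + |b| ^ (2*s)) := by nlinarith
  · have hN := NNReal.rpow_add_le_mul_rpow_add_rpow (Real.toNNReal |a|) (Real.toNNReal |b|) h.le
    have h2 : ((2:ℝ≥0) ^ (2*s-1) : ℝ≥0) = Real.toNNReal ((2:ℝ) ^ (2*s-1)) := by
      rw [Real.toNNReal_rpow_of_nonneg (by norm_num)]
      norm_num
    calc (|a| + |b|) ^ (2*s)
        = ((Real.toNNReal ((|a| + |b|) ^ (2*s)) : ℝ≥0) : ℝ) := by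
          rw [Real.coe_toNNReal _ (by positivity)]
      _ ≤ (((2:ℝ≥0) ^ (2*s-1) * (Real.toNNReal |a| ^ (2*s) + Real.toNNReal |b| ^ (2*s)) : ℝ≥0) : ℝ) := by
          rw [← hcast]; exact_mod_cast hN
      _ = 2 ^ (2*s-1) * (|a| ^ (2*s) + |b| ^ (2*s)) := by
          rw [NNReal.coe_mul, habs, h2, Real.coe_toNNReal _ (by positivity)]
      _ ≤ 2 ^ s * (|a| ^ (2*s) + |b| ^ (2*s)) := by
          have hle : (2:ℝ) ^ (2*s-1) ≤ 2 ^ s :=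
            Real.rpow_le_rpow_of_exponent_le (by norm_num) (by linarith)
          nlinarith

lemma green1_key {s z Q ε : ℝ} (hs : s ∈ Set.Ioc (0:ℝ) 1)
    (hz : 0 < z) (hQ : 0 ≤ Q) (hε : 0 < ε) (r r' : ℝ) :
    |green1 ((z + Q) / 2) (ε * (r - r')) - green1 ((z + Q) / 2) 0| ^ 2
      ≤ ε ^ (2 * s) * z ^ (s - 1) / 2 * (|r| ^ (2 * s) + |r'| ^ (2 * s)) := by
  obtain ⟨hs0, hs1⟩ := hs
  set lam : ℝ := (z + Q) / 2 with hlamdef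
  have hlam : 0 < lam := by positivity
  have h3 : |ε * (r - r')| ^ (2 * s) = ε ^ (2 * s) * |r - r'| ^ (2 * s) := by
    rw [abs_mul, Real.mul_rpow (abs_nonneg _) (abs_nonneg _), abs_of_pos hε]
  have h4 := rpow_sub_abs_le ⟨hs0, hs1⟩ r r'
  have h5 : lam ^ (s - 1) ≤ 2 ^ (1 - s) * z ^ (s - 1) := by
    have hle : z / 2 ≤ lam := by rw [hlamdef]; linarith
    have := Real.rpow_le_rpow_of_nonpos (by positivity : (0:ℝ) < z / 2) hle
      (by linarith : s - 1 ≤ 0)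
    refine this.trans (le_of_eq ?_)
    rw [Real.div_rpow hz.le (by norm_num), div_eq_mul_inv, ← Real.rpow_neg (by norm_num),
      neg_sub, mul_comm]
  have h22 : (2:ℝ) ^ (1 - s) * 2 ^ s = 2 := by
    rw [← Real.rpow_add (by norm_num : (0:ℝ) < 2)]
    norm_num
  have hAB : (0:ℝ) ≤ |r| ^ (2 * s) + |r'| ^ (2 * s) := by positivity
  calc |green1 lam (ε * (r - r')) - green1 lam 0| ^ 2
      ≤ lam ^ (s - 1) * |ε * (r - r')| ^ (2 * s) / 4 :=
        green1_pointwise hlam ⟨hs0, hs1⟩ _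
    _ = lam ^ (s - 1) * (ε ^ (2 * s) * |r - r'| ^ (2 * s)) / 4 := by rw [h3]
    _ ≤ (2 ^ (1 - s) * z ^ (s - 1)) * (ε ^ (2 * s) * (2 ^ s * (|r| ^ (2 * s) + |r'| ^ (2 * s)))) / 4 := by
        gcongr
    _ = ε ^ (2 * s) * z ^ (s - 1) / 2 * (|r| ^ (2 * s) + |r'| ^ (2 * s)) := by
        have h4' : (0:ℝ) < 4 := by norm_num
        linear_combination (z ^ (s - 1) * ε ^ (2 * s) * (|r| ^ (2 * s) + |r'| ^ (2 * s)) / 4) * h22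

theorem phi12_convergence_rate (V : ℝ → ℝ) (hV : Integrable V)
    (s : ℝ) (hs : s ∈ Set.Ioc (0 : ℝ) 1)
    (hVs : Integrable (fun r : ℝ => |r| ^ (2 * s) * |V r|))
    (z Q ε : ℝ) (hz : 0 < z) (hQ : 0 ≤ Q) (hε : 0 < ε) :
    (∫ r : ℝ, ∫ r' : ℝ, |V r| * |V r'| *
        |green1 ((z + Q) / 2) (ε * (r - r')) - green1 ((z + Q) / 2) 0| ^ 2)
      ≤ ε ^ (2 * s) * z ^ (s - 1) * (∫ r : ℝ, |V r|) *
          (∫ r : ℝ, |r| ^ (2 * s) * |V r|) := by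
  have hV1 : Integrable (fun r : ℝ => |V r|) := hV.abs
  set c : ℝ := ε ^ (2 * s) * z ^ (s - 1) / 2 with hc
  have hc0 : 0 ≤ c := by positivity
  set I1 : ℝ := ∫ r : ℝ, |V r| with hI1
  set I2 : ℝ := ∫ r : ℝ, |r| ^ (2 * s) * |V r| with hI2
  have hI1nn : 0 ≤ I1 := integral_nonneg fun r => abs_nonneg _
  have hI2nn : 0 ≤ I2 := integral_nonneg fun r => by positivity
  -- the dominating function
  set H : ℝ → ℝ → ℝ := fun r r' =>
    (c * |V r| * |r| ^ (2 * s)) * |V r'| + (c * |V r|) * (|r'| ^ (2 * s) * |V r'|) with hH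
  have hHint : ∀ r, Integrable (H r) := fun r =>
    ((hV1.const_mul _).add (hVs.const_mul _))
  have hHval : ∀ r, (∫ r', H r r') = (c * I1) * (|r| ^ (2 * s) * |V r|) + (c * I2) * |V r| := by
    intro r
    rw [hH]
    rw [integral_add (hV1.const_mul _) (hVs.const_mul _), integral_const_mul, integral_const_mul]
    ring
  -- pointwise bound
  have hpt : ∀ r r', |V r| * |V r'| *
      |green1 ((z + Q) / 2) (ε * (r - r')) - green1 ((z + Q) / 2) 0| ^ 2 ≤ H r r' := by
    intro r r'
    have hkey := green1_key hs hz hQ hε r r'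
    have hVV : (0:ℝ) ≤ |V r| * |V r'| := by positivity
    calc |V r| * |V r'| * |green1 ((z + Q) / 2) (ε * (r - r')) - green1 ((z + Q) / 2) 0| ^ 2
        ≤ |V r| * |V r'| * (c * (|r| ^ (2 * s) + |r'| ^ (2 * s))) :=
          mul_le_mul_of_nonneg_left hkey hVV
      _ = H r r' := by rw [hH]; ring
  -- inner inequality
  have hinner : ∀ r, (∫ r' : ℝ, |V r| * |V r'| *
      |green1 ((z + Q) / 2) (ε * (r - r')) - green1 ((z + Q) / 2) 0| ^ 2) ≤ ∫ r', H r r' := by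
    intro r
    refine integral_mono_of_nonneg (Filter.Eventually.of_forall fun r' => by positivity)
      (hHint r) (Filter.Eventually.of_forall fun r' => hpt r r')
  -- outer inequality
  have houter : (∫ r : ℝ, ∫ r' : ℝ, |V r| * |V r'| *
      |green1 ((z + Q) / 2) (ε * (r - r')) - green1 ((z + Q) / 2) 0| ^ 2)
      ≤ ∫ r : ℝ, ∫ r' : ℝ, H r r' := by
    refine integral_mono_of_nonneg
      (Filter.Eventually.of_forall fun r => integral_nonneg fun r' => by positivity)
      ?_ (Filter.Eventually.of_forall hinner)
    have : (fun r : ℝ => ∫ r', H r r') =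
        fun r => (c * I1) * (|r| ^ (2 * s) * |V r|) + (c * I2) * |V r| := funext hHval
    rw [this]
    exact (hVs.const_mul _).add (hV1.const_mul _)
  refine houter.trans ?_
  have hfin : (∫ r : ℝ, ∫ r' : ℝ, H r r') = c * I1 * I2 + c * I2 * I1 := by
    simp only [hHval]
    rw [integral_add (hVs.const_mul _) (hV1.const_mul _), integral_const_mul, integral_const_mul]
  rw [hfin, hc]
  ring_nf
  rfl
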